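/- For the 3-agent matching instance with valuations v_1 = (1/3, 2/3, 0), v_2 = (0, 2/3, 1/3), v_3 = (1/3, 1/3, 1/3) over items (a,b,c), the unique iEF lottery is the one assigning probability 1/3 to each of the matchings (a,b,c), (a,c,b), and (b,c,a), and this lottery is not ex-post Pareto-efficient since (a,c,b) is Pareto-dominated by (a,b,c). -/

import Mathlib

/-!
Agent 0 values item 2 strictly below every other item and agent 1 values item 0 strictly below
every other item, so an iEF lottery can give neither of them that item: the envied expectation
would exceed the value of what they hold. This leaves the support `{1, swap 1 2, finRotate 3}`.
Conditioned on agent 0 holding item 0 (matchings `1` and `swap 1 2`), the two other agents hold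
items 1 and 2 in opposite orders, and envy towards either of them forces `x 1 = x (swap 1 2)`;
conditioning on agent 1 holding item 2 gives `x (swap 1 2) = x (finRotate 3)` in the same way.
-/

open Finset

/-- Probability that agent `i` receives item `j` under a lottery `x` over matchings. -/
def prMatch {n : ℕ} (x : Equiv.Perm (Fin n) → ℝ) (i j : Fin n) : ℝ :=
  ∑ b ∈ Finset.univ.filter (fun b : Equiv.Perm (Fin n) => b i = j), x b

/-- Interim envy-freeness of a lottery over matchings: for all agents `i ≠ k` and every
item `j` received by `i` with positive probability, `v_i(j) ≥ E[v_i(b(k)) | b(i) = j]`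
(stated multiplied through by the positive probability `Pr[b(i) = j]`). -/
def MIEF {n : ℕ} (v : Fin n → Fin n → ℝ) (x : Equiv.Perm (Fin n) → ℝ) : Prop :=
  ∀ i k : Fin n, i ≠ k → ∀ j : Fin n, 0 < prMatch x i j →
    (∑ b ∈ Finset.univ.filter (fun b : Equiv.Perm (Fin n) => b i = j), x b * v i (b k))
      ≤ v i j * prMatch x i j
/-- Valuations of the instance: items (a,b,c) = (0,1,2). -/
noncomputable def v9 : Fin 3 → Fin 3 → ℝ :=
  ![![1/3, 2/3, 0], ![0, 2/3, 1/3], ![1/3, 1/3, 1/3]]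

/-- The lottery assigning probability 1/3 to each of the matchings (a,b,c) = id,
(a,c,b) = swap 1 2, and (b,c,a) = finRotate 3. -/
noncomputable def lot9 : Equiv.Perm (Fin 3) → ℝ := fun b =>
  if b = Equiv.refl (Fin 3) ∨ b = Equiv.swap 1 2 ∨ b = finRotate 3 then 1/3 else 0

open Equiv

section

variable {n : ℕ} {v : Fin n → Fin n → ℝ} {x : Perm (Fin n) → ℝ}

theorem prMatch_nonneg (hx : ∀ b, 0 ≤ x b) (i j : Fin n) : 0 ≤ prMatch x i j :=
  sum_nonneg fun b _ => hx b

theorem MIEF.sum_mul_le (h : MIEF v x) (hx : ∀ b, 0 ≤ x b) {i k : Fin n} (hik : i ≠ k)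
    (j : Fin n) :
    ∑ b ∈ univ.filter (fun b : Perm (Fin n) => b i = j), x b * v i (b k)
      ≤ v i j * prMatch x i j := by
  rcases (prMatch_nonneg hx i j).lt_or_eq with hpos | hzero
  · exact h i k hik j hpos
  · have hx0 : ∀ b ∈ univ.filter (fun b : Perm (Fin n) => b i = j), x b = 0 :=
      (sum_eq_zero_iff_of_nonneg fun b _ => hx b).1 hzero.symm
    rw [← hzero, mul_zero]
    exact (sum_eq_zero fun b hb => by rw [hx0 b hb, zero_mul]).le

theorem MIEF.prMatch_eq_zero_of_forall_lt (h : MIEF v x) (hx : ∀ b, 0 ≤ x b) {i k : Fin n}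
    (hik : i ≠ k) {j : Fin n} (hworst : ∀ j', j' ≠ j → v i j < v i j') :
    prMatch x i j = 0 := by
  have hlt : ∀ b ∈ univ.filter (fun b : Perm (Fin n) => b i = j), 0 < v i (b k) - v i j :=
    fun b hb => sub_pos.2 <| hworst _ <| (mem_filter.1 hb).2 ▸ b.injective.ne hik.symm
  have hsum : ∑ b ∈ univ.filter (fun b : Perm (Fin n) => b i = j),
      x b * (v i (b k) - v i j) = 0 := by
    refine le_antisymm ?_ (sum_nonneg fun b hb => mul_nonneg (hx b) (hlt b hb).le)
    have := h.sum_mul_le hx hik j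
    simp only [mul_sub, sum_sub_distrib, ← sum_mul]
    rw [prMatch] at this
    linarith
  refine sum_eq_zero fun b hb => ?_
  have hterm := (sum_eq_zero_iff_of_nonneg fun b hb =>
    mul_nonneg (hx b) (hlt b hb).le).1 hsum b hb
  exact (mul_eq_zero.1 hterm).resolve_right (hlt b hb).ne'

end

theorem univ_perm_fin_three : (univ : Finset (Perm (Fin 3))) =
    {1, swap 0 1, swap 0 2, swap 1 2, finRotate 3, finRotate 3 * finRotate 3} := by
  decide

theorem sum_perm_fin_three (f : Perm (Fin 3) → ℝ) :
    ∑ b, f b = f 1 + f (swap 0 1) + f (swap 0 2) + f (swap 1 2)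
      + f (finRotate 3) + f (finRotate 3 * finRotate 3) := by
  simp (disch := decide) only [univ_perm_fin_three, sum_insert, sum_singleton]
  ring

theorem perm_fin_three_cases (b : Perm (Fin 3)) : b = 1 ∨ b = swap 0 1 ∨ b = swap 0 2 ∨
    b = swap 1 2 ∨ b = finRotate 3 ∨ b = finRotate 3 * finRotate 3 := by
  simpa [univ_perm_fin_three] using mem_univ b

theorem lot9_nonneg (b : Perm (Fin 3)) : 0 ≤ lot9 b := by
  unfold lot9
  split_ifs <;> norm_num

theorem sum_lot9 : ∑ b, lot9 b = 1 := by
  norm_num +decide [sum_perm_fin_three, lot9]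

theorem MIEF_v9_lot9 : MIEF v9 lot9 := by
  intro i k hik j hpos
  simp only [prMatch, sum_filter, sum_perm_fin_three] at hpos ⊢
  fin_cases i <;> fin_cases k <;> fin_cases j <;>
    simp +decide [lot9, v9, swap_apply_def] at hik hpos ⊢ <;> norm_num

theorem eq_lot9_of_MIEF {x : Perm (Fin 3) → ℝ} (hx : ∀ b, 0 ≤ x b) (hsum : ∑ b, x b = 1)
    (h : MIEF v9 x) : x = lot9 := by
  have h02 : x (swap 0 2) + x (finRotate 3 * finRotate 3) = 0 := by
    have := h.prMatch_eq_zero_of_forall_lt hx (i := 0) (k := 1) (j := 2) (by decide) (by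
      intro j' hj'; fin_cases j' <;> simp [v9] at hj' ⊢)
    simpa +decide [prMatch, sum_filter, sum_perm_fin_three, swap_apply_def] using this
  have h10 : x (swap 0 1) + x (finRotate 3 * finRotate 3) = 0 := by
    have := h.prMatch_eq_zero_of_forall_lt hx (i := 1) (k := 0) (j := 0) (by decide) (by
      intro j' hj'; fin_cases j' <;> simp [v9] at hj' ⊢)
    simpa +decide [prMatch, sum_filter, sum_perm_fin_three, swap_apply_def] using this
  have hid : x 1 = x (swap 1 2) := by
    have h1 := h.sum_mul_le hx (i := 0) (k := 1) (by decide) 0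
    have h2 := h.sum_mul_le hx (i := 0) (k := 2) (by decide) 0
    simp +decide [prMatch, sum_filter, sum_perm_fin_three, v9] at h1 h2
    linarith
  have hrot : x (swap 1 2) = x (finRotate 3) := by
    have h1 := h.sum_mul_le hx (i := 1) (k := 0) (by decide) 2
    have h2 := h.sum_mul_le hx (i := 1) (k := 2) (by decide) 2
    simp +decide [prMatch, sum_filter, sum_perm_fin_three, v9, swap_apply_def] at h1 h2
    linarith
  rw [sum_perm_fin_three] at hsum
  have := hx (swap 0 1); have := hx (swap 0 2); have := hx (finRotate 3 * finRotate 3)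
  funext b
  rcases perm_fin_three_cases b with rfl | rfl | rfl | rfl | rfl | rfl <;>
    norm_num +decide [lot9] <;> linarith

/-- `lot9` is the unique iEF lottery of this instance, and it is not
ex-post Pareto-efficient: the matching (a,c,b), which is in its support, is
Pareto-dominated by the matching (a,b,c). -/
theorem unique_iEF_not_ex_post_PE :
    (∀ b, 0 ≤ lot9 b) ∧ (∑ b, lot9 b = 1) ∧ MIEF v9 lot9 ∧
    (∀ x : Equiv.Perm (Fin 3) → ℝ,
      (∀ b, 0 ≤ x b) → (∑ b, x b = 1) → MIEF v9 x → x = lot9) ∧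
    0 < lot9 (Equiv.swap 1 2) ∧
    (∀ i : Fin 3, v9 i (Equiv.swap 1 2 i) ≤ v9 i (Equiv.refl (Fin 3) i)) ∧
    (∃ i : Fin 3, v9 i (Equiv.swap 1 2 i) < v9 i (Equiv.refl (Fin 3) i)) := by
  refine ⟨lot9_nonneg, sum_lot9, MIEF_v9_lot9, fun _ => eq_lot9_of_MIEF, ?_, ?_, 1, ?_⟩
  · norm_num +decide [lot9]
  · intro i
    fin_cases i <;> simp [v9, swap_apply_def]
    norm_num
  · simp [v9]
    norm_num
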